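/- Suppose x ≥ 2 and k is a positive integer with x^k < q, and let t be a real number and a(p) complex numbers indexed by primes. Then there exist nonnegative reals c_χ, indexed by the Dirichlet characters χ modulo q, with ∑_{χ mod q} c_χ = φ(q), such that for every character χ mod q one has |∑_{p ≤ x} χ(p) a(p)/p^{1/2 + it}|^{2k} ≤ c_χ · k! · (∑_{p ≤ x} |a(p)|²/p)^k. -/

import Mathlib

/-!
Expanding the `k`-th power, `(∑_p χ(p) f(p))^k = ∑_v χ(∏ v) ∏ f(vᵢ)` over `k`-tuples `v` of primes
`≤ x`. Since `x^k < q`, tuples with different products have different residues mod `q`, so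
orthogonality of characters bounds `∑_χ |⋯|^{2k}` by `φ(q)` times the sum over residues `r` of
`|∑_{∏ v ≡ r} ∏ f(vᵢ)|²`. By unique factorisation each such fibre consists of the rearrangements of
one tuple, hence has at most `k!` elements, and Cauchy–Schwarz leaves
`φ(q) k! ∑_v |∏ f(vᵢ)|² = φ(q) k! (∑_p |f(p)|²)^k`. Given this bound on the sum over `χ`, the
weights `c_χ` are the normalised moments plus an equal share of the slack.
-/

open Finset

theorem Tuple.exists_perm_eq_comp_of_perm {α : Type*} [LinearOrder α] {k : ℕ}
    {v w : Fin k → α} (h : (List.ofFn v).Perm (List.ofFn w)) :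
    ∃ σ : Equiv.Perm (Fin k), w = v ∘ σ := by
  have hperm := ((sort v).ofFn_comp_perm v).trans (h.trans ((sort w).ofFn_comp_perm w).symm)
  have hsort : v ∘ sort v = w ∘ sort w :=
    List.ofFn_injective <| hperm.eq_of_pairwise'
      (monotone_sort v).sortedLE_ofFn.pairwise (monotone_sort w).sortedLE_ofFn.pairwise
  refine ⟨(sort w).symm.trans (sort v), funext fun i => ?_⟩
  simpa using (congrFun hsort ((sort w).symm i)).symm

theorem Nat.exists_perm_eq_comp_of_prod_eq {k : ℕ} {v w : Fin k → ℕ}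
    (hv : ∀ i, (v i).Prime) (hw : ∀ i, (w i).Prime) (h : ∏ i, v i = ∏ i, w i) :
    ∃ σ : Equiv.Perm (Fin k), w = v ∘ σ := by
  refine Tuple.exists_perm_eq_comp_of_perm ?_
  have hvw : (List.ofFn v).prod = (List.ofFn w).prod := by simpa only [List.prod_ofFn] using h
  exact (primeFactorsList_unique hvw (by simpa [List.mem_ofFn] using hv)).trans
    (primeFactorsList_unique rfl (by simpa [List.mem_ofFn] using hw)).symm

theorem Nat.card_le_factorial_of_prod_eq {k : ℕ} {s : Finset (Fin k → ℕ)}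
    (hs : ∀ v ∈ s, ∀ i, (v i).Prime) (hprod : ∀ v ∈ s, ∀ w ∈ s, ∏ i, v i = ∏ i, w i) :
    #s ≤ k.factorial := by
  obtain rfl | ⟨v, hv⟩ := s.eq_empty_or_nonempty
  · simp
  have hsub : s ⊆ univ.image fun σ : Equiv.Perm (Fin k) => v ∘ σ := fun w hw => by
    obtain ⟨σ, rfl⟩ :=
      Nat.exists_perm_eq_comp_of_prod_eq (hs v hv) (hs w hw) (hprod v hv w hw)
    exact mem_image_of_mem _ (mem_univ σ)
  calc #s ≤ #(univ.image fun σ : Equiv.Perm (Fin k) => v ∘ σ) := card_le_card hsub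
    _ ≤ #(univ : Finset (Equiv.Perm (Fin k))) := Finset.card_image_le
    _ = k.factorial := by rw [Finset.card_univ, Fintype.card_perm, Fintype.card_fin]

namespace DirichletCharacter

variable {q : ℕ} [NeZero q]

theorem sum_apply_mul_conj_apply (r s : ZMod q) :
    ∑ χ : DirichletCharacter ℂ q, χ r * starRingEnd ℂ (χ s) =
      if r = s ∧ IsUnit s then (q.totient : ℂ) else 0 := by
  by_cases hs : IsUnit s
  · have hconj : ∀ χ : DirichletCharacter ℂ q, starRingEnd ℂ (χ s) = χ s⁻¹ := fun χ => by
      rw [← RCLike.star_def, MulChar.star_apply', MulChar.inv_apply, ← hs.unit_spec,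
        Ring.inverse_unit, ZMod.inv_coe_unit]
    simp_rw [hconj, fun χ : DirichletCharacter ℂ q => mul_comm (χ r), sum_char_inv_mul_char_eq ℂ hs,
      hs, and_true, eq_comm]
  · simp [MulChar.map_nonunit _ hs, hs]

theorem sum_norm_sq_sum_apply_mul_eq (b : ZMod q → ℂ) :
    ∑ χ : DirichletCharacter ℂ q, ‖∑ r, χ r * b r‖ ^ 2 =
      q.totient * ∑ r with IsUnit r, ‖b r‖ ^ 2 := by
  apply Complex.ofReal_injective
  push_cast
  simp_rw [← Complex.mul_conj', map_sum, map_mul, sum_mul_sum]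
  calc ∑ χ : DirichletCharacter ℂ q, ∑ r, ∑ s,
        χ r * b r * (starRingEnd ℂ (χ s) * starRingEnd ℂ (b s))
      = ∑ r, ∑ s, (∑ χ : DirichletCharacter ℂ q, χ r * starRingEnd ℂ (χ s)) *
          (b r * starRingEnd ℂ (b s)) := by
        simp_rw [sum_mul, mul_mul_mul_comm]
        rw [sum_comm]
        exact sum_congr rfl fun _ _ => sum_comm
    _ = _ := by
        simp_rw [sum_apply_mul_conj_apply, ite_mul, zero_mul, ite_and, sum_ite_eq, mem_univ,
          if_true, mul_sum, sum_filter]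

theorem sum_norm_sq_sum_apply_comp_mul_le {ι : Type*} (s : Finset ι) (m : ι → ZMod q)
    (g : ι → ℂ) {K : ℕ} (hK : ∀ r, #{i ∈ s | m i = r} ≤ K) :
    ∑ χ : DirichletCharacter ℂ q, ‖∑ i ∈ s, χ (m i) * g i‖ ^ 2 ≤
      q.totient * K * ∑ i ∈ s, ‖g i‖ ^ 2 := by
  have hfiber : ∀ χ : DirichletCharacter ℂ q,
      ∑ i ∈ s, χ (m i) * g i = ∑ r, χ r * ∑ i ∈ s with m i = r, g i := fun χ => by
    rw [← sum_fiberwise s m]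
    refine sum_congr rfl fun r _ => ?_
    rw [mul_sum]
    exact sum_congr rfl fun i hi => by rw [(mem_filter.mp hi).2]
  have hcauchy : ∀ r, ‖∑ i ∈ s with m i = r, g i‖ ^ 2 ≤ K * ∑ i ∈ s with m i = r, ‖g i‖ ^ 2 :=
    fun r => calc
      ‖∑ i ∈ s with m i = r, g i‖ ^ 2 ≤ (∑ i ∈ s with m i = r, ‖g i‖) ^ 2 := by
        gcongr; exact norm_sum_le _ _
      _ ≤ #{i ∈ s | m i = r} * ∑ i ∈ s with m i = r, ‖g i‖ ^ 2 := sq_sum_le_card_mul_sum_sq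
      _ ≤ K * ∑ i ∈ s with m i = r, ‖g i‖ ^ 2 := by
        gcongr
        exact_mod_cast hK r
  calc ∑ χ : DirichletCharacter ℂ q, ‖∑ i ∈ s, χ (m i) * g i‖ ^ 2
      = q.totient * ∑ r with IsUnit r, ‖∑ i ∈ s with m i = r, g i‖ ^ 2 := by
        simp_rw [hfiber, sum_norm_sq_sum_apply_mul_eq]
    _ ≤ q.totient * ∑ r, ‖∑ i ∈ s with m i = r, g i‖ ^ 2 := by
        gcongr
        exact filter_subset _ _
    _ ≤ q.totient * ∑ r, K * ∑ i ∈ s with m i = r, ‖g i‖ ^ 2 := by gcongr with r; exact hcauchy r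
    _ = q.totient * K * ∑ i ∈ s, ‖g i‖ ^ 2 := by rw [← mul_sum, sum_fiberwise, mul_assoc]

theorem sum_norm_sum_prime_mul_pow_le (k : ℕ) {P : Finset ℕ} (hP : ∀ p ∈ P, p.Prime)
    (hPq : ∀ v ∈ Fintype.piFinset fun _ : Fin k => P, ∏ i, v i < q) (f : ℕ → ℂ) :
    ∑ χ : DirichletCharacter ℂ q, ‖∑ p ∈ P, χ p * f p‖ ^ (2 * k) ≤
      q.totient * k.factorial * (∑ p ∈ P, ‖f p‖ ^ 2) ^ k := by
  set V := Fintype.piFinset fun _ : Fin k => P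
  have hpow : ∀ χ : DirichletCharacter ℂ q,
      (∑ p ∈ P, χ p * f p) ^ k = ∑ v ∈ V, χ (∏ i, v i : ℕ) * ∏ i, f (v i) := fun χ => by
    rw [sum_pow']
    exact sum_congr rfl fun v _ => by rw [prod_mul_distrib, Nat.cast_prod, map_prod]
  have hfiber : ∀ r : ZMod q, #{v ∈ V | ((∏ i, v i : ℕ) : ZMod q) = r} ≤ k.factorial := by
    refine fun r => Nat.card_le_factorial_of_prod_eq
      (fun v hv i => hP _ (Fintype.mem_piFinset.mp (mem_filter.mp hv).1 i)) fun v hv w hw => ?_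
    obtain ⟨hvV, hvr⟩ := mem_filter.mp hv
    obtain ⟨hwV, hwr⟩ := mem_filter.mp hw
    rw [← hwr, ZMod.natCast_eq_natCast_iff', Nat.mod_eq_of_lt (hPq v hvV),
      Nat.mod_eq_of_lt (hPq w hwV)] at hvr
    exact hvr
  calc ∑ χ : DirichletCharacter ℂ q, ‖∑ p ∈ P, χ p * f p‖ ^ (2 * k)
      = ∑ χ : DirichletCharacter ℂ q, ‖∑ v ∈ V, χ (∏ i, v i : ℕ) * ∏ i, f (v i)‖ ^ 2 := by
        simp_rw [mul_comm 2 k, pow_mul, ← norm_pow, hpow]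
    _ ≤ q.totient * k.factorial * ∑ v ∈ V, ‖∏ i, f (v i)‖ ^ 2 :=
        sum_norm_sq_sum_apply_comp_mul_le V _ _ hfiber
    _ = q.totient * k.factorial * (∑ p ∈ P, ‖f p‖ ^ 2) ^ k := by
        rw [sum_pow']; simp_rw [norm_prod, ← prod_pow]; rfl

end DirichletCharacter

theorem exists_nonneg_sum_eq_of_sum_le {ι : Type*} [Fintype ι] [Nonempty ι] {L : ι → ℝ}
    {D N : ℝ} (hL : ∀ i, 0 ≤ L i) (hD : 0 ≤ D) (hN : 0 ≤ N) (hsum : ∑ i, L i ≤ N * D) :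
    ∃ c : ι → ℝ, (∀ i, 0 ≤ c i) ∧ ∑ i, c i = N ∧ ∀ i, L i ≤ c i * D := by
  have hcard : (0 : ℝ) < Fintype.card ι := by exact_mod_cast Fintype.card_pos
  obtain rfl | hD := hD.eq_or_lt
  · refine ⟨fun _ => N / Fintype.card ι, fun _ => by positivity, ?_, fun i => ?_⟩
    · rw [sum_const, card_univ, nsmul_eq_mul, mul_div_cancel₀ _ hcard.ne']
    · rw [mul_zero] at hsum ⊢
      exact (single_le_sum (fun j _ => hL j) (mem_univ i)).trans hsum
  · have hslack : 0 ≤ N - (∑ i, L i) / D := sub_nonneg.mpr ((div_le_iff₀ hD).mpr hsum)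
    refine ⟨fun i => L i / D + (N - (∑ i, L i) / D) / Fintype.card ι,
      fun i => by have := hL i; positivity, ?_, fun i => ?_⟩
    · rw [sum_add_distrib, ← sum_div, sum_const, card_univ, nsmul_eq_mul,
        mul_div_cancel₀ _ hcard.ne']
      ring
    · rw [add_mul, div_mul_cancel₀ _ hD.ne']
      exact le_add_of_nonneg_right (mul_nonneg (div_nonneg hslack hcard.le) hD.le)

theorem norm_div_natCast_cpow_half_add_mul_I_sq (z : ℂ) (n : ℕ) (t : ℝ) :
    ‖z / (n : ℂ) ^ ((1 / 2 : ℂ) + t * Complex.I)‖ ^ 2 = ‖z‖ ^ 2 / n := by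
  rw [norm_div, Complex.norm_natCast_cpow_of_re_ne_zero _ (by norm_num), div_pow,
    ← Real.rpow_mul_natCast n.cast_nonneg]
  norm_num

theorem natCast_prod_le_pow_of_mem_piFinset_primes_le_floor {x : ℝ} {k : ℕ} {v : Fin k → ℕ}
    (hv : v ∈ Fintype.piFinset fun _ => (Iic ⌊x⌋₊).filter Nat.Prime) :
    ((∏ i, v i : ℕ) : ℝ) ≤ x ^ k := by
  have hle : ∀ i, (v i : ℝ) ≤ x := fun i => by
    obtain ⟨hvi, hprime⟩ := mem_filter.mp (Fintype.mem_piFinset.mp hv i)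
    exact (Nat.le_floor_iff' hprime.ne_zero).mp (mem_Iic.mp hvi)
  push_cast
  simpa using prod_le_prod (s := univ) (fun i _ => (v i).cast_nonneg) fun i _ => hle i

theorem character_moment_prime_sums_pointwise_general (q : ℕ) [NeZero q] (x : ℝ)
    (k : ℕ) (hxk : x ^ k < (q : ℝ)) (t : ℝ) (a : ℕ → ℂ) :
    ∃ c : DirichletCharacter ℂ q → ℝ, (∀ χ, 0 ≤ c χ) ∧
      (∑ χ : DirichletCharacter ℂ q, c χ = (q.totient : ℝ)) ∧
      ∀ χ : DirichletCharacter ℂ q,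
        ‖∑ p ∈ (Finset.Iic ⌊x⌋₊).filter Nat.Prime,
            χ ((p : ℕ) : ZMod q) * a p /
              (p : ℂ) ^ ((1 / 2 : ℂ) + (t : ℂ) * Complex.I)‖ ^ (2 * k)
          ≤ c χ * (k.factorial : ℝ) *
              (∑ p ∈ (Finset.Iic ⌊x⌋₊).filter Nat.Prime,
                ‖a p‖ ^ 2 / (p : ℝ)) ^ k := by
  set P := (Iic ⌊x⌋₊).filter Nat.Prime
  set f : ℕ → ℂ := fun p => a p / (p : ℂ) ^ ((1 / 2 : ℂ) + t * Complex.I)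
  have hP : ∀ p ∈ P, p.Prime := fun p hp => (mem_filter.mp hp).2
  have hPq : ∀ v ∈ Fintype.piFinset fun _ : Fin k => P, ∏ i, v i < q := fun v hv => by
    exact_mod_cast (natCast_prod_le_pow_of_mem_piFinset_primes_le_floor hv).trans_lt hxk
  obtain ⟨c, hc0, hcsum, hc⟩ := exists_nonneg_sum_eq_of_sum_le
    (L := fun χ : DirichletCharacter ℂ q => ‖∑ p ∈ P, χ p * f p‖ ^ (2 * k))
    (fun _ => by positivity) (by positivity) q.totient.cast_nonneg
    ((DirichletCharacter.sum_norm_sum_prime_mul_pow_le k hP hPq f).trans_eq (mul_assoc _ _ _))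
  refine ⟨c, hc0, hcsum, fun χ => ?_⟩
  simp_rw [mul_div_assoc, ← norm_div_natCast_cpow_half_add_mul_I_sq _ _ t, mul_assoc]
  exact hc χ

/-- **Lemma 2.7, second part.** For `x ≥ 2` and a positive integer `k` with `x^k < q`,
any real `t` and complex coefficients `a(p)`, there exist nonnegative reals `c_χ` with
`∑_{χ mod q} c_χ = φ(q)` such that for every character `χ` mod `q`,
`|∑_{p ≤ x} χ(p)a(p)/p^{1/2+it}|^{2k} ≤ c_χ k! (∑_{p ≤ x} |a(p)|²/p)^k`. -/
theorem character_moment_prime_sums_pointwise (q : ℕ) [NeZero q] (x : ℝ) (hx : 2 ≤ x)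
    (k : ℕ) (hk : 1 ≤ k) (hxk : x ^ k < (q : ℝ)) (t : ℝ) (a : ℕ → ℂ) :
    ∃ c : DirichletCharacter ℂ q → ℝ, (∀ χ, 0 ≤ c χ) ∧
      (∑ χ : DirichletCharacter ℂ q, c χ = (q.totient : ℝ)) ∧
      ∀ χ : DirichletCharacter ℂ q,
        ‖∑ p ∈ (Finset.Iic ⌊x⌋₊).filter Nat.Prime,
            χ ((p : ℕ) : ZMod q) * a p /
              (p : ℂ) ^ ((1 / 2 : ℂ) + (t : ℂ) * Complex.I)‖ ^ (2 * k)
          ≤ c χ * (k.factorial : ℝ) *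
              (∑ p ∈ (Finset.Iic ⌊x⌋₊).filter Nat.Prime,
                ‖a p‖ ^ 2 / (p : ℝ)) ^ k :=
  character_moment_prime_sums_pointwise_general q x k hxk t a
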